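/- arXiv:1901.07069 — 7 statements merged into one kernel-verified Lean document; each statement's English description precedes it below -/
import Mathlib

section
/- Monotonicity of the value function (Lemma 2). Fix a reference state X† ∈ X and define the relative value iteration sequence by V_1 ≡ 0 and V_{n+1}(X) = min_{w∈W} J_{V_n}(X, w) − min_{w∈W} J_{V_n}(X†, w) for n ≥ 1. Then every iterate V_n is monotone with respect to ⪯; consequently, if V_n converges pointwise to a function V, then V is monotone: for any X¹, X² ∈ X with A²_{d,k} ≥ A¹_{d,k}, A²_{r,k} ≥ A¹_{r,k} and D²_k = D¹_k for all k, one has V(X²) ≥ V(X¹). -/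
namespace AoI

/-- Per-device control action: idle `(0,0)`, continue the current in-transmission
update `(1,1)`, or sample and transmit a new update `(1,2)`. -/
inductive Act : Type
  | idle : Act
  | cont : Act
  | new  : Act
  deriving DecidableEq

instance : Fintype Act :=
  ⟨{Act.idle, Act.cont, Act.new}, by intro a; cases a <;> simp⟩

/-- Per-device state `(A_d, A_r, D)`. -/
abbrev S : Type := ℕ × ℕ × ℕ

/-- Success successor under action `(1,1)`. -/
def sCont (L Ahd Ahr : ℕ) (x : S) : S :=
  if x.2.2 = 1 then (0, min (x.1 + 1) Ahr, L)
  else (min (x.1 + 1) Ahd, min (x.2.1 + 1) Ahr, x.2.2 - 1)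

/-- Failure successor under `(1,1)`; this is also the unscheduled successor
`X_{k,un}` under action `(0,0)`. -/
def fCont (Ahd Ahr : ℕ) (x : S) : S :=
  (min (x.1 + 1) Ahd, min (x.2.1 + 1) Ahr, x.2.2)

/-- Success successor under action `(1,2)`. -/
def sNew (L Ahr : ℕ) (x : S) : S := (1, min (x.2.1 + 1) Ahr, L - 1)

/-- Failure successor under action `(1,2)`. -/
def fNew (L Ahr : ℕ) (x : S) : S := (0, min (x.2.1 + 1) Ahr, L)

/-- Per-device transition kernel `P_k(x' | x, a)`. -/
def Pk (lam : ℝ) (L Ahd Ahr : ℕ) (x x' : S) : Act → ℝ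
  | Act.idle => if x' = fCont Ahd Ahr x then 1 else 0
  | Act.cont =>
      (if x' = sCont L Ahd Ahr x then lam else 0) +
        (if x' = fCont Ahd Ahr x then 1 - lam else 0)
  | Act.new =>
      (if x' = sNew L Ahr x then lam else 0) +
        (if x' = fNew L Ahr x then 1 - lam else 0)

/-- Per-device state space `{0,…,Âd} × {0,…,Âr} × {1,…,L}`. -/
def spaceS (L Ahd Ahr : ℕ) : Finset S :=
  Finset.range (Ahd + 1) ×ˢ (Finset.range (Ahr + 1) ×ˢ Finset.Icc 1 L)

/-- Joint state space `X = X_1 × ⋯ × X_K`. -/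
def jointSpace {K : ℕ} (L Ahd Ahr : Fin K → ℕ) : Finset (Fin K → S) :=
  Fintype.piFinset fun k => spaceS (L k) (Ahd k) (Ahr k)

/-- Joint transition kernel `P(X' | X, w) = ∏ₖ P_k(X'_k | X_k, w_k)`. -/
def Pjoint {K : ℕ} (lam : Fin K → ℝ) (L Ahd Ahr : Fin K → ℕ)
    (x x' : Fin K → S) (w : Fin K → Act) : ℝ :=
  ∏ k, Pk (lam k) (L k) (Ahd k) (Ahr k) (x k) (x' k) (w k)

/-- Feasible joint actions: at most `M` devices are scheduled. -/
def feasible (K M : ℕ) : Finset (Fin K → Act) :=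
  Finset.univ.filter fun w => (Finset.univ.filter fun k => w k ≠ Act.idle).card ≤ M

lemma feasible_nonempty (K M : ℕ) : (feasible K M).Nonempty := by
  refine ⟨fun _ => Act.idle, Finset.mem_filter.mpr ⟨Finset.mem_univ _, ?_⟩⟩
  simp

/-- The state–action cost `J_V(X, w) = Σₖ A_{r,k} + Σ_{X'∈X} P(X'|X,w) V(X')`. -/
def J {K : ℕ} (lam : Fin K → ℝ) (L Ahd Ahr : Fin K → ℕ)
    (V : (Fin K → S) → ℝ) (x : Fin K → S) (w : Fin K → Act) : ℝ :=
  (∑ k, ((x k).2.1 : ℝ)) +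
    ∑ x' ∈ jointSpace L Ahd Ahr, Pjoint lam L Ahd Ahr x x' w * V x'

/-- Componentwise order on per-device states:
`(A¹_d, A¹_r, D¹) ⪯ (A²_d, A²_r, D²)` iff `A¹_d ≤ A²_d`, `A¹_r ≤ A²_r`, `D¹ = D²`. -/
def xleS (x y : S) : Prop := x.1 ≤ y.1 ∧ x.2.1 ≤ y.2.1 ∧ x.2.2 = y.2.2


/-- Successor state of a device under action `a` and outcome `b`
(`true` = success, `false` = failure; for `idle` both coincide). -/
def succA (L Ahd Ahr : ℕ) (a : Act) (b : Bool) (x : S) : S :=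
  match a with
  | Act.idle => fCont Ahd Ahr x
  | Act.cont => if b then sCont L Ahd Ahr x else fCont Ahd Ahr x
  | Act.new  => if b then sNew L Ahr x else fNew L Ahr x

/-- Weight of outcome `b`. -/
def wtB (lam : ℝ) (b : Bool) : ℝ := if b then lam else 1 - lam

lemma Pk_eq_sum (lam : ℝ) (L Ahd Ahr : ℕ) (x x' : S) (a : Act) :
    Pk lam L Ahd Ahr x x' a
      = ∑ b : Bool, (if x' = succA L Ahd Ahr a b x then wtB lam b else 0) := by
  cases a <;> simp [Pk, succA, wtB, Fintype.sum_bool] <;> split_ifs <;> ring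

lemma mem_spaceS {L Ahd Ahr : ℕ} {x : S} :
    x ∈ spaceS L Ahd Ahr ↔ x.1 ≤ Ahd ∧ x.2.1 ≤ Ahr ∧ 1 ≤ x.2.2 ∧ x.2.2 ≤ L := by
  simp [spaceS, Finset.mem_product, Nat.lt_succ_iff, Finset.mem_Icc, and_assoc]

lemma succA_mem {L Ahd Ahr : ℕ} (hL : 2 ≤ L) (hAd : 1 ≤ Ahd) {x : S}
    (hx : x ∈ spaceS L Ahd Ahr) (a : Act) (b : Bool) :
    succA L Ahd Ahr a b x ∈ spaceS L Ahd Ahr := by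
  rw [mem_spaceS] at hx ⊢
  cases a <;> cases b <;>
    simp only [succA, sCont, fCont, sNew, fNew, if_true, if_false, Bool.false_eq_true,
      ite_true, ite_false] <;>
    (try split_ifs) <;> simp_all <;> omega

lemma succA_mono {L Ahd Ahr : ℕ} {x y : S} (h : xleS x y) (a : Act) (b : Bool) :
    xleS (succA L Ahd Ahr a b x) (succA L Ahd Ahr a b y) := by
  obtain ⟨h1, h2, h3⟩ := h
  cases a <;> cases b <;>
    simp only [succA, sCont, fCont, sNew, fNew, xleS, h3, Bool.false_eq_true,
      ite_true, ite_false] <;>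
    (try split_ifs) <;> simp_all [xleS] <;> omega

lemma prod_indicator {K : ℕ} (g : Fin K → S) (c : Fin K → ℝ) (x' : Fin K → S) :
    (∏ k, if x' k = g k then c k else 0) = if x' = g then ∏ k, c k else 0 := by
  by_cases h : x' = g
  · subst h; simp
  · rw [if_neg h]
    obtain ⟨k, hk⟩ := Function.ne_iff.mp h
    exact Finset.prod_eq_zero (Finset.mem_univ k) (if_neg hk)

lemma exp_eq {K : ℕ} (lam : Fin K → ℝ) (L Ahd Ahr : Fin K → ℕ)
    (hL : ∀ k, 2 ≤ L k) (hAd : ∀ k, 1 ≤ Ahd k)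
    (V : (Fin K → S) → ℝ) {x : Fin K → S} (hx : x ∈ jointSpace L Ahd Ahr)
    (w : Fin K → Act) :
    ∑ x' ∈ jointSpace L Ahd Ahr, Pjoint lam L Ahd Ahr x x' w * V x'
      = ∑ s : Fin K → Bool, (∏ k, wtB (lam k) (s k)) *
          V (fun k => succA (L k) (Ahd k) (Ahr k) (w k) (s k) (x k)) := by
  have hP : ∀ x', Pjoint lam L Ahd Ahr x x' w
      = ∑ s : Fin K → Bool, ∏ k,
          (if x' k = succA (L k) (Ahd k) (Ahr k) (w k) (s k) (x k)
            then wtB (lam k) (s k) else 0) := by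
    intro x'
    unfold Pjoint
    rw [Finset.prod_congr rfl fun k _ => Pk_eq_sum (lam k) (L k) (Ahd k) (Ahr k)
      (x k) (x' k) (w k), Finset.prod_univ_sum, ← Fintype.piFinset_univ]
  simp_rw [hP, Finset.sum_mul]
  rw [Finset.sum_comm]
  refine Finset.sum_congr rfl fun s _ => ?_
  have hmem : (fun k => succA (L k) (Ahd k) (Ahr k) (w k) (s k) (x k))
      ∈ jointSpace L Ahd Ahr := by
    rw [jointSpace, Fintype.mem_piFinset]
    intro k
    exact succA_mem (hL k) (hAd k)
      (Fintype.mem_piFinset.mp hx k) (w k) (s k)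
  have hcong : ∀ x' ∈ jointSpace L Ahd Ahr,
      (∏ k, if x' k = succA (L k) (Ahd k) (Ahr k) (w k) (s k) (x k)
        then wtB (lam k) (s k) else 0) * V x'
      = if x' = (fun k => succA (L k) (Ahd k) (Ahr k) (w k) (s k) (x k))
          then (∏ k, wtB (lam k) (s k)) * V x' else 0 := by
    intro x' _
    rw [prod_indicator]
    split_ifs <;> simp
  rw [Finset.sum_congr rfl hcong, Finset.sum_ite_eq' _ _
    (fun x' => (∏ k, wtB (lam k) (s k)) * V x'), if_pos hmem]

lemma J_mono {K : ℕ} (lam : Fin K → ℝ) (L Ahd Ahr : Fin K → ℕ)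
    (hlam : ∀ k, 0 < lam k ∧ lam k ≤ 1)
    (hL : ∀ k, 2 ≤ L k) (hAd : ∀ k, 1 ≤ Ahd k)
    (V : (Fin K → S) → ℝ)
    (hV : ∀ x1 ∈ jointSpace L Ahd Ahr, ∀ x2 ∈ jointSpace L Ahd Ahr,
      (∀ k, xleS (x1 k) (x2 k)) → V x1 ≤ V x2)
    {x1 x2 : Fin K → S} (hx1 : x1 ∈ jointSpace L Ahd Ahr)
    (hx2 : x2 ∈ jointSpace L Ahd Ahr) (hle : ∀ k, xleS (x1 k) (x2 k))
    (w : Fin K → Act) :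
    J lam L Ahd Ahr V x1 w ≤ J lam L Ahd Ahr V x2 w := by
  unfold J
  refine add_le_add (Finset.sum_le_sum fun k _ => Nat.cast_le.mpr (hle k).2.1) ?_
  rw [exp_eq lam L Ahd Ahr hL hAd V hx1 w, exp_eq lam L Ahd Ahr hL hAd V hx2 w]
  refine Finset.sum_le_sum fun s _ => ?_
  have hw : 0 ≤ ∏ k, wtB (lam k) (s k) :=
    Finset.prod_nonneg fun k _ => by
      cases s k <;> simp [wtB] <;> linarith [(hlam k).1, (hlam k).2]
  refine mul_le_mul_of_nonneg_left ?_ hw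
  refine hV _ ?_ _ ?_ (fun k => succA_mono (hle k) (w k) (s k))
  · rw [jointSpace, Fintype.mem_piFinset]
    exact fun k => succA_mem (hL k) (hAd k) (Fintype.mem_piFinset.mp hx1 k) (w k) (s k)
  · rw [jointSpace, Fintype.mem_piFinset]
    exact fun k => succA_mem (hL k) (hAd k) (Fintype.mem_piFinset.mp hx2 k) (w k) (s k)

/-- Lemma 2: every iterate of the relative value iteration
`V_1 ≡ 0`, `V_{n+1}(X) = min_w J_{V_n}(X,w) − min_w J_{V_n}(X†,w)` is monotone
w.r.t. `⪯`, and consequently any pointwise limit `V` of the sequence is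
monotone: `V(X²) ≥ V(X¹)` whenever `A²_{d,k} ≥ A¹_{d,k}`, `A²_{r,k} ≥ A¹_{r,k}`
and `D²_k = D¹_k` for all `k`. -/
theorem value_function_monotone
    (K M : ℕ) (hK : 1 ≤ K) (hM1 : 1 ≤ M) (hM2 : M ≤ K)
    (lam : Fin K → ℝ) (L Ahd Ahr : Fin K → ℕ)
    (hlam : ∀ k, 0 < lam k ∧ lam k ≤ 1)
    (hL : ∀ k, 2 ≤ L k) (hAd : ∀ k, 1 ≤ Ahd k) (hAr : ∀ k, 1 ≤ Ahr k)
    (Xdag : Fin K → S) (hdag : Xdag ∈ jointSpace L Ahd Ahr)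
    (Vseq : ℕ → (Fin K → S) → ℝ)
    (hinit : ∀ x, Vseq 1 x = 0)
    (hrec : ∀ n, 1 ≤ n → ∀ x, Vseq (n + 1) x =
      (feasible K M).inf' (feasible_nonempty K M)
          (fun w => J lam L Ahd Ahr (Vseq n) x w) -
        (feasible K M).inf' (feasible_nonempty K M)
          (fun w => J lam L Ahd Ahr (Vseq n) Xdag w)) :
    (∀ n, 1 ≤ n → ∀ x1 ∈ jointSpace L Ahd Ahr, ∀ x2 ∈ jointSpace L Ahd Ahr,
      (∀ k, xleS (x1 k) (x2 k)) → Vseq n x1 ≤ Vseq n x2) ∧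
    (∀ Vlim : (Fin K → S) → ℝ,
      (∀ x, Filter.Tendsto (fun n => Vseq n x) Filter.atTop (nhds (Vlim x))) →
      ∀ x1 ∈ jointSpace L Ahd Ahr, ∀ x2 ∈ jointSpace L Ahd Ahr,
        (∀ k, xleS (x1 k) (x2 k)) → Vlim x1 ≤ Vlim x2) := by
  have main : ∀ n, ∀ x1 ∈ jointSpace L Ahd Ahr, ∀ x2 ∈ jointSpace L Ahd Ahr,
      (∀ k, xleS (x1 k) (x2 k)) → Vseq (n + 1) x1 ≤ Vseq (n + 1) x2 := by
    intro n
    induction n with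
    | zero =>
      intro x1 _ x2 _ _
      rw [hinit x1, hinit x2]
    | succ n ih =>
      intro x1 hx1 x2 hx2 hle
      rw [hrec (n + 1) (Nat.le_add_left 1 n) x1, hrec (n + 1) (Nat.le_add_left 1 n) x2]
      refine sub_le_sub_right ?_ _
      refine Finset.le_inf' _ _ fun w hw => ?_
      refine le_trans (Finset.inf'_le _ hw) ?_
      exact J_mono lam L Ahd Ahr hlam hL hAd (Vseq (n + 1)) ih hx1 hx2 hle w
  have main' : ∀ n, 1 ≤ n → ∀ x1 ∈ jointSpace L Ahd Ahr, ∀ x2 ∈ jointSpace L Ahd Ahr,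
      (∀ k, xleS (x1 k) (x2 k)) → Vseq n x1 ≤ Vseq n x2 := by
    intro n hn
    obtain ⟨m, rfl⟩ := Nat.exists_eq_add_of_le hn
    rw [Nat.add_comm]
    exact main m
  refine ⟨main', fun Vlim hlim x1 hx1 x2 hx2 hle => ?_⟩
  refine le_of_tendsto_of_tendsto (hlim x1) (hlim x2) ?_
  filter_upwards [Filter.eventually_ge_atTop 1] with n hn
  exact main' n hn x1 hx1 x2 hx2 hle

end AoI
end

section
/- Persistence of the optimal action (equation (15)). Let V : X → ℝ be monotone with respect to ⪯ and let w ∈ W. Let X, X' ∈ X satisfy: A'_{r,k} = A_{r,k} and D'_k = D_k for all k; A'_{d,k} ≥ A_{d,k} for every k with w_k = (1,2); and A'_{d,k} = A_{d,k} for every other k. If J_V(X, w) ≤ J_V(X, w'') for all w'' ∈ W, then J_V(X', w) ≤ J_V(X', w'') for all w'' ∈ W; i.e., if w is an optimal action at X then w is an optimal action at X'. -/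
namespace AoI

/-! Under `w`, a device with `w_k = (1,2)` discards its old sample, so its successor states do
not depend on `A_{d,k}`; hence `J_V(X', w) = J_V(X, w)`. For any other action `w''`, the
successor states are monotone in the current state and `X ⪯ X'`, so monotonicity of `V` gives
`J_V(X, w'') ≤ J_V(X', w'')`. Chaining with the optimality of `w` at `X` proves the claim. -/

/-- Each action is resolved by a success flag `b`, drawn with probability `Act.weight`;
`idle` is deterministic and always takes the `true` branch, with weight `1`. -/
def Act.next (L Ahd Ahr : ℕ) : Act → Bool → S → S
  | .idle, _ => fCont Ahd Ahr
  | .cont, true => sCont L Ahd Ahr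
  | .cont, false => fCont Ahd Ahr
  | .new, true => sNew L Ahr
  | .new, false => fNew L Ahr

def Act.weight (lam : ℝ) : Act → Bool → ℝ
  | .idle, true => 1
  | .idle, false => 0
  | _, true => lam
  | _, false => 1 - lam

lemma Act.weight_nonneg {lam : ℝ} (h0 : 0 ≤ lam) (h1 : lam ≤ 1) (a : Act) (b : Bool) :
    0 ≤ a.weight lam b := by
  cases a <;> cases b <;> simp only [weight] <;> linarith

lemma Act.next_mem_spaceS {L Ahd Ahr : ℕ} (hL : 2 ≤ L) (hAd : 1 ≤ Ahd) (a : Act) (b : Bool)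
    {x : S} (hx : x ∈ spaceS L Ahd Ahr) : a.next L Ahd Ahr b x ∈ spaceS L Ahd Ahr := by
  simp only [spaceS, Finset.mem_product, Finset.mem_range, Finset.mem_Icc] at hx ⊢
  cases a <;> cases b <;> simp only [next, sCont, fCont, sNew, fNew, apply_ite Prod.fst,
    apply_ite Prod.snd] <;> (try split_ifs) <;> omega

lemma Act.next_mono (L Ahd Ahr : ℕ) (a : Act) (b : Bool) {x y : S} (h : xleS x y) :
    xleS (a.next L Ahd Ahr b x) (a.next L Ahd Ahr b y) := by
  obtain ⟨h1, h2, h3⟩ := h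
  cases a <;> cases b <;> simp only [next, sCont, fCont, sNew, fNew, xleS, apply_ite Prod.fst,
    apply_ite Prod.snd, h3, and_true] <;> (try split_ifs) <;> omega

lemma Act.next_new_eq_of_snd_eq (L Ahd Ahr : ℕ) (b : Bool) {x y : S} (h : x.2.1 = y.2.1) :
    Act.new.next L Ahd Ahr b x = Act.new.next L Ahd Ahr b y := by
  cases b <;> simp only [next, sNew, fNew, h]

lemma Pk_eq_sum_next (lam : ℝ) (L Ahd Ahr : ℕ) (x x' : S) (a : Act) :
    Pk lam L Ahd Ahr x x' a =
      ∑ b : Bool, if x' = a.next L Ahd Ahr b x then a.weight lam b else 0 := by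
  cases a <;> simp only [Pk, Fintype.sum_bool] <;> split_ifs <;> simp_all [Act.next, Act.weight]

section Joint

variable {K : ℕ} (lam : Fin K → ℝ) (L Ahd Ahr : Fin K → ℕ)

def jointNext (w : Fin K → Act) (b : Fin K → Bool) (x : Fin K → S) : Fin K → S :=
  fun k => (w k).next (L k) (Ahd k) (Ahr k) (b k) (x k)

lemma jointNext_mem_jointSpace (hL : ∀ k, 2 ≤ L k) (hAd : ∀ k, 1 ≤ Ahd k) (w : Fin K → Act)
    (b : Fin K → Bool) {x : Fin K → S} (hx : x ∈ jointSpace L Ahd Ahr) :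
    jointNext L Ahd Ahr w b x ∈ jointSpace L Ahd Ahr :=
  Fintype.mem_piFinset.mpr fun k =>
    (w k).next_mem_spaceS (hL k) (hAd k) (b k) (Fintype.mem_piFinset.mp hx k)

lemma Pjoint_eq_sum (x x' : Fin K → S) (w : Fin K → Act) :
    Pjoint lam L Ahd Ahr x x' w =
      ∑ b : Fin K → Bool, if x' = jointNext L Ahd Ahr w b x
        then ∏ k, (w k).weight (lam k) (b k) else 0 := by
  simp only [Pjoint, Pk_eq_sum_next, Fintype.prod_sum, Fintype.prod_ite_zero, funext_iff,
    jointNext]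
  convert rfl -- the two `if`s differ only in their `Decidable` instances

lemma sum_Pjoint_mul_eq (hL : ∀ k, 2 ≤ L k) (hAd : ∀ k, 1 ≤ Ahd k) (V : (Fin K → S) → ℝ)
    {x : Fin K → S} (hx : x ∈ jointSpace L Ahd Ahr) (w : Fin K → Act) :
    ∑ x' ∈ jointSpace L Ahd Ahr, Pjoint lam L Ahd Ahr x x' w * V x' =
      ∑ b : Fin K → Bool,
        (∏ k, (w k).weight (lam k) (b k)) * V (jointNext L Ahd Ahr w b x) := by
  simp only [Pjoint_eq_sum, Finset.sum_mul, ite_mul, zero_mul]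
  rw [Finset.sum_comm]
  refine Finset.sum_congr rfl fun b _ => ?_
  rw [Finset.sum_ite_eq' _ _ (fun x' => (∏ k, (w k).weight (lam k) (b k)) * V x'),
    if_pos (jointNext_mem_jointSpace L Ahd Ahr hL hAd w b hx)]

lemma J_le_J_of_le (hlam : ∀ k, 0 ≤ lam k ∧ lam k ≤ 1) (hL : ∀ k, 2 ≤ L k)
    (hAd : ∀ k, 1 ≤ Ahd k) (V : (Fin K → S) → ℝ)
    (hV : ∀ x1 ∈ jointSpace L Ahd Ahr, ∀ x2 ∈ jointSpace L Ahd Ahr,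
      (∀ k, xleS (x1 k) (x2 k)) → V x1 ≤ V x2)
    {x y : Fin K → S} (hx : x ∈ jointSpace L Ahd Ahr) (hy : y ∈ jointSpace L Ahd Ahr)
    (hxy : ∀ k, xleS (x k) (y k)) (w : Fin K → Act) :
    J lam L Ahd Ahr V x w ≤ J lam L Ahd Ahr V y w := by
  rw [J, J, sum_Pjoint_mul_eq lam L Ahd Ahr hL hAd V hx,
    sum_Pjoint_mul_eq lam L Ahd Ahr hL hAd V hy]
  gcongr with k _ b _
  · exact (hxy k).2.1
  · exact Finset.prod_nonneg fun k _ => (w k).weight_nonneg (hlam k).1 (hlam k).2 _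
  · exact hV _ (jointNext_mem_jointSpace L Ahd Ahr hL hAd w b hx)
      _ (jointNext_mem_jointSpace L Ahd Ahr hL hAd w b hy)
      fun k => Act.next_mono _ _ _ _ _ (hxy k)

lemma J_eq_of_eq_of_ne_new (hL : ∀ k, 2 ≤ L k) (hAd : ∀ k, 1 ≤ Ahd k)
    (V : (Fin K → S) → ℝ) (w : Fin K → Act) {x y : Fin K → S}
    (hx : x ∈ jointSpace L Ahd Ahr) (hy : y ∈ jointSpace L Ahd Ahr)
    (hr : ∀ k, (x k).2.1 = (y k).2.1) (hoth : ∀ k, w k ≠ Act.new → x k = y k) :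
    J lam L Ahd Ahr V x w = J lam L Ahd Ahr V y w := by
  have hnext : ∀ b, jointNext L Ahd Ahr w b x = jointNext L Ahd Ahr w b y := by
    intro b
    funext k
    by_cases hk : w k = Act.new
    · simp only [jointNext, hk, Act.next_new_eq_of_snd_eq _ _ _ _ (hr k)]
    · simp only [jointNext, hoth k hk]
  simp only [J, sum_Pjoint_mul_eq lam L Ahd Ahr hL hAd V hx,
    sum_Pjoint_mul_eq lam L Ahd Ahr hL hAd V hy, hr, hnext]

end Joint

theorem persistence_of_optimal_action_general
    (K M : ℕ)
    (lam : Fin K → ℝ) (L Ahd Ahr : Fin K → ℕ)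
    (hlam : ∀ k, 0 < lam k ∧ lam k ≤ 1)
    (hL : ∀ k, 2 ≤ L k) (hAd : ∀ k, 1 ≤ Ahd k)
    (V : (Fin K → S) → ℝ)
    (hV : ∀ x1 ∈ jointSpace L Ahd Ahr, ∀ x2 ∈ jointSpace L Ahd Ahr,
      (∀ k, xleS (x1 k) (x2 k)) → V x1 ≤ V x2)
    (w : Fin K → Act)
    (x x' : Fin K → S)
    (hx : x ∈ jointSpace L Ahd Ahr) (hx' : x' ∈ jointSpace L Ahd Ahr)
    (hr : ∀ k, (x' k).2.1 = (x k).2.1)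
    (hd : ∀ k, (x' k).2.2 = (x k).2.2)
    (hnew : ∀ k, w k = Act.new → (x k).1 ≤ (x' k).1)
    (hoth : ∀ k, w k ≠ Act.new → (x' k).1 = (x k).1)
    (hopt : ∀ w'' ∈ feasible K M,
      J lam L Ahd Ahr V x w ≤ J lam L Ahd Ahr V x w'') :
    ∀ w'' ∈ feasible K M,
      J lam L Ahd Ahr V x' w ≤ J lam L Ahd Ahr V x' w'' := by
  intro w'' hw''
  have hxx' : ∀ k, xleS (x k) (x' k) := fun k => by
    by_cases hk : w k = Act.new
    · exact ⟨hnew k hk, (hr k).ge, (hd k).symm⟩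
    · exact ⟨(hoth k hk).ge, (hr k).ge, (hd k).symm⟩
  have heq_off_new : ∀ k, w k ≠ Act.new → x' k = x k := fun k hk =>
    Prod.ext (hoth k hk) (Prod.ext (hr k) (hd k))
  calc J lam L Ahd Ahr V x' w = J lam L Ahd Ahr V x w :=
        J_eq_of_eq_of_ne_new lam L Ahd Ahr hL hAd V w hx' hx hr heq_off_new
    _ ≤ J lam L Ahd Ahr V x w'' := hopt w'' hw''
    _ ≤ J lam L Ahd Ahr V x' w'' :=
        J_le_J_of_le lam L Ahd Ahr (fun k => ⟨(hlam k).1.le, (hlam k).2⟩) hL hAd V hV hx hx'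
          hxx' w''

/-- equation (15): persistence of the optimal action. If `w` is
optimal at `X`, then `w` remains optimal at any `X'` obtained from `X` by
increasing the device AoI `A_{d,k}` at devices `k` with `w_k = (1,2)`. -/
theorem persistence_of_optimal_action
    (K M : ℕ) (hK : 1 ≤ K) (hM1 : 1 ≤ M) (hM2 : M ≤ K)
    (lam : Fin K → ℝ) (L Ahd Ahr : Fin K → ℕ)
    (hlam : ∀ k, 0 < lam k ∧ lam k ≤ 1)
    (hL : ∀ k, 2 ≤ L k) (hAd : ∀ k, 1 ≤ Ahd k) (hAr : ∀ k, 1 ≤ Ahr k)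
    (V : (Fin K → S) → ℝ)
    (hV : ∀ x1 ∈ jointSpace L Ahd Ahr, ∀ x2 ∈ jointSpace L Ahd Ahr,
      (∀ k, xleS (x1 k) (x2 k)) → V x1 ≤ V x2)
    (w : Fin K → Act) (hw : w ∈ feasible K M)
    (x x' : Fin K → S)
    (hx : x ∈ jointSpace L Ahd Ahr) (hx' : x' ∈ jointSpace L Ahd Ahr)
    (hr : ∀ k, (x' k).2.1 = (x k).2.1)
    (hd : ∀ k, (x' k).2.2 = (x k).2.2)
    (hnew : ∀ k, w k = Act.new → (x k).1 ≤ (x' k).1)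
    (hoth : ∀ k, w k ≠ Act.new → (x' k).1 = (x k).1)
    (hopt : ∀ w'' ∈ feasible K M,
      J lam L Ahd Ahr V x w ≤ J lam L Ahd Ahr V x w'') :
    ∀ w'' ∈ feasible K M,
      J lam L Ahd Ahr V x' w ≤ J lam L Ahd Ahr V x' w'' :=
  persistence_of_optimal_action_general K M lam L Ahd Ahr hlam hL hAd V hV w x x' hx hx' hr hd hnew
    hoth hopt

end AoI
end

section
/- Additive separability of the value function under a semi-randomized base policy (Lemma 3). Let q be a probability distribution on U with scheduling probabilities p_k. Suppose that for each device k there exist θ_k ∈ ℝ and V̂_k : X_k → ℝ satisfying the per-device Bellman equation θ_k + V̂_k(X_k) = A_r + min_{v∈{1,2}} [ p_k·(λ_k·V̂_k(X^{(v)}_{k,s}) + (1−λ_k)·V̂_k(X^{(v)}_{k,f})) + (1−p_k)·V̂_k(X_{k,un}) ] for all X_k = (A_d, A_r, D) ∈ X_k. Then θ := Σ_{k=1}^K θ_k and V̂(X) := Σ_{k=1}^K V̂_k(X_k) satisfy the joint Bellman equation θ + V̂(X) = Σ_{k=1}^K A_{r,k} + min_{v∈{1,2}^K} Σ_{u∈U}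 q(u) Σ_{X'∈X} P(X' | X, w(u,v))·V̂(X') for all X ∈ X. -/
namespace AoI

/-- Scheduling actions of the semi-randomized base policy: subsets of devices
of size at most `M`, encoded as Boolean vectors. -/
def schedSet (K M : ℕ) : Finset (Fin K → Bool) :=
  Finset.univ.filter fun u => (Finset.univ.filter fun k => u k = true).card ≤ M

/-- Joint action induced by a scheduling vector `u` and a sampling vector `v`
(`v k = false` means continue `(1,1)`, `v k = true` means new update `(1,2)`). -/
def inducedAction {K : ℕ} (u v : Fin K → Bool) : Fin K → Act :=
  fun j => if u j then (if v j then Act.new else Act.cont) else Act.idle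

lemma fCont_mem {L Ahd Ahr : ℕ} {x : S} (hx : x ∈ spaceS L Ahd Ahr) :
    fCont Ahd Ahr x ∈ spaceS L Ahd Ahr := by
  rw [mem_spaceS] at hx ⊢; unfold fCont; dsimp; omega

lemma sCont_mem {L Ahd Ahr : ℕ} (hL : 2 ≤ L) {x : S} (hx : x ∈ spaceS L Ahd Ahr) :
    sCont L Ahd Ahr x ∈ spaceS L Ahd Ahr := by
  rw [mem_spaceS] at hx; unfold sCont
  split <;> rw [mem_spaceS] <;> dsimp <;> omega

lemma sNew_mem {L Ahd Ahr : ℕ} (hL : 2 ≤ L) (hAd : 1 ≤ Ahd) {x : S} (hx : x ∈ spaceS L Ahd Ahr) :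
    sNew L Ahr x ∈ spaceS L Ahd Ahr := by
  rw [mem_spaceS] at hx ⊢; unfold sNew; dsimp; omega

lemma fNew_mem {L Ahd Ahr : ℕ} (hL : 2 ≤ L) {x : S} (hx : x ∈ spaceS L Ahd Ahr) :
    fNew L Ahr x ∈ spaceS L Ahd Ahr := by
  rw [mem_spaceS] at hx ⊢; unfold fNew; dsimp; omega

/-- Expected value of `f` after one step from `x` under action `a`. -/
def expAct (lam : ℝ) (L Ahd Ahr : ℕ) (f : S → ℝ) (x : S) : Act → ℝ
  | Act.idle => f (fCont Ahd Ahr x)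
  | Act.cont => lam * f (sCont L Ahd Ahr x) + (1 - lam) * f (fCont Ahd Ahr x)
  | Act.new  => lam * f (sNew L Ahr x) + (1 - lam) * f (fNew L Ahr x)

lemma sum_Pk_mul (lam : ℝ) {L Ahd Ahr : ℕ} (hL : 2 ≤ L) (hAd : 1 ≤ Ahd) {x : S}
    (hx : x ∈ spaceS L Ahd Ahr) (f : S → ℝ) (a : Act) :
    ∑ x' ∈ spaceS L Ahd Ahr, Pk lam L Ahd Ahr x x' a * f x' =
      expAct lam L Ahd Ahr f x a := by
  cases a <;>
    simp [Pk, expAct, add_mul, ite_mul, Finset.sum_add_distrib,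
      Finset.sum_ite_eq', fCont_mem hx, sCont_mem hL hx, sNew_mem hL hAd hx, fNew_mem hL hx]

lemma sum_Pk_one (lam : ℝ) {L Ahd Ahr : ℕ} (hL : 2 ≤ L) (hAd : 1 ≤ Ahd) {x : S}
    (hx : x ∈ spaceS L Ahd Ahr) (a : Act) :
    ∑ x' ∈ spaceS L Ahd Ahr, Pk lam L Ahd Ahr x x' a = 1 := by
  have h := sum_Pk_mul lam hL hAd hx (fun _ => 1) a
  simp only [mul_one] at h
  rw [h]; cases a <;> simp [expAct]

lemma joint_exp {K : ℕ} (lam : Fin K → ℝ) (L Ahd Ahr : Fin K → ℕ)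
    (hL : ∀ k, 2 ≤ L k) (hAd : ∀ k, 1 ≤ Ahd k) (Vk : Fin K → S → ℝ)
    {x : Fin K → S} (hx : x ∈ jointSpace L Ahd Ahr) (w : Fin K → Act) :
    ∑ x' ∈ jointSpace L Ahd Ahr, Pjoint lam L Ahd Ahr x x' w * (∑ k, Vk k (x' k)) =
      ∑ j, expAct (lam j) (L j) (Ahd j) (Ahr j) (Vk j) (x j) (w j) := by
  have hxk : ∀ k, x k ∈ spaceS (L k) (Ahd k) (Ahr k) := fun k =>
    Fintype.mem_piFinset.mp hx k
  simp only [Finset.mul_sum]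
  rw [Finset.sum_comm]
  refine Finset.sum_congr rfl fun j _ => ?_
  have h1 : ∀ x' : Fin K → S,
      Pjoint lam L Ahd Ahr x x' w * Vk j (x' j) =
      ∏ k, (Pk (lam k) (L k) (Ahd k) (Ahr k) (x k) (x' k) (w k) *
        (if k = j then Vk k (x' k) else 1)) := by
    intro x'
    rw [Finset.prod_mul_distrib,
      Finset.prod_ite_eq' Finset.univ j fun k => Vk k (x' k),
      if_pos (Finset.mem_univ j)]
    rfl
  simp only [h1]
  rw [jointSpace, ← Finset.prod_univ_sum (fun k => spaceS (L k) (Ahd k) (Ahr k))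
    (fun k y => Pk (lam k) (L k) (Ahd k) (Ahr k) (x k) y (w k) *
      (if k = j then Vk k y else 1))]
  rw [Finset.prod_eq_single j]
  · simp only [if_pos rfl]
    exact sum_Pk_mul (lam j) (hL j) (hAd j) (hxk j) (Vk j) (w j)
  · intro k _ hk
    simp only [if_neg hk, mul_one]
    exact sum_Pk_one (lam k) (hL k) (hAd k) (hxk k) (w k)
  · intro h; exact absurd (Finset.mem_univ j) h

lemma policy_sum {K M : ℕ} (q : (Fin K → Bool) → ℝ)
    (hq1 : ∑ u ∈ schedSet K M, q u = 1)
    (p : Fin K → ℝ)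
    (hp : ∀ k, p k = ∑ u ∈ (schedSet K M).filter (fun u => u k = true), q u)
    (E : Fin K → Act → ℝ) (v : Fin K → Bool) :
    ∑ u ∈ schedSet K M, q u * ∑ j, E j (inducedAction u v j) =
      ∑ j, (p j * E j (if v j then Act.new else Act.cont) + (1 - p j) * E j Act.idle) := by
  simp only [Finset.mul_sum]
  rw [Finset.sum_comm]
  refine Finset.sum_congr rfl fun j _ => ?_
  rw [← Finset.sum_filter_add_sum_filter_not (schedSet K M) (fun u => u j = true)
    (fun u => q u * E j (inducedAction u v j))]
  congr 1
  · rw [hp j, Finset.sum_mul]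
    refine Finset.sum_congr rfl fun u hu => ?_
    have hu' : u j = true := (Finset.mem_filter.mp hu).2
    simp [inducedAction, hu']
  · have hnot : ∑ u ∈ (schedSet K M).filter (fun u => ¬ u j = true), q u = 1 - p j := by
      have hh := Finset.sum_filter_add_sum_filter_not (schedSet K M)
        (fun u => u j = true) q
      rw [hq1] at hh; rw [hp j]; linarith
    rw [← hnot, Finset.sum_mul]
    refine Finset.sum_congr rfl fun u hu => ?_
    have hu' : u j = false := by
      have := (Finset.mem_filter.mp hu).2; simpa using this
    simp [inducedAction, hu']

lemma inf'_sum_bool {K : ℕ} (c : Fin K → Bool → ℝ) :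
    (Finset.univ : Finset (Fin K → Bool)).inf' Finset.univ_nonempty
        (fun v => ∑ j, c j (v j)) = ∑ j, min (c j false) (c j true) := by
  apply le_antisymm
  · have h := Finset.inf'_le (fun v => ∑ j, c j (v j))
      (Finset.mem_univ (fun j => if c j true ≤ c j false then true else false))
    refine h.trans_eq (Finset.sum_congr rfl fun j _ => ?_)
    beta_reduce
    by_cases hj : c j true ≤ c j false
    · rw [if_pos hj, min_eq_right hj]
    · rw [if_neg hj, min_eq_left (le_of_not_ge hj)]
  · refine Finset.le_inf' _ _ fun v _ => Finset.sum_le_sum fun j _ => ?_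
    cases hvj : v j
    · exact min_le_left _ _
    · exact min_le_right _ _

/-- Lemma 3: additive separability of the value function under a
semi-randomized base policy: per-device solutions `(θ_k, V̂_k)` of the
per-device Bellman equations yield a solution `(Σ θ_k, Σ V̂_k)` of the joint
Bellman equation. -/
theorem additive_separability_value_function
    (K M : ℕ) (hK : 1 ≤ K) (hM1 : 1 ≤ M) (hM2 : M ≤ K)
    (lam : Fin K → ℝ) (L Ahd Ahr : Fin K → ℕ)
    (hlam : ∀ k, 0 < lam k ∧ lam k ≤ 1)
    (hL : ∀ k, 2 ≤ L k) (hAd : ∀ k, 1 ≤ Ahd k) (hAr : ∀ k, 1 ≤ Ahr k)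
    (q : (Fin K → Bool) → ℝ)
    (hq0 : ∀ u ∈ schedSet K M, 0 ≤ q u)
    (hq1 : ∑ u ∈ schedSet K M, q u = 1)
    (p : Fin K → ℝ)
    (hp : ∀ k, p k = ∑ u ∈ (schedSet K M).filter (fun u => u k = true), q u)
    (θ : Fin K → ℝ) (Vk : Fin K → S → ℝ)
    (hbell : ∀ k, ∀ x ∈ spaceS (L k) (Ahd k) (Ahr k),
      θ k + Vk k x = ((x.2.1 : ℝ)) +
        min
          (p k * (lam k * Vk k (sCont (L k) (Ahd k) (Ahr k) x) +
              (1 - lam k) * Vk k (fCont (Ahd k) (Ahr k) x)) +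
            (1 - p k) * Vk k (fCont (Ahd k) (Ahr k) x))
          (p k * (lam k * Vk k (sNew (L k) (Ahr k) x) +
              (1 - lam k) * Vk k (fNew (L k) (Ahr k) x)) +
            (1 - p k) * Vk k (fCont (Ahd k) (Ahr k) x))) :
    ∀ x ∈ jointSpace L Ahd Ahr,
      (∑ k, θ k) + (∑ k, Vk k (x k)) =
        (∑ k, ((x k).2.1 : ℝ)) +
          (Finset.univ : Finset (Fin K → Bool)).inf' Finset.univ_nonempty
            (fun v => ∑ u ∈ schedSet K M, q u *
              ∑ x' ∈ jointSpace L Ahd Ahr,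
                Pjoint lam L Ahd Ahr x x' (inducedAction u v) *
                  (∑ k, Vk k (x' k))) := by
  intro x hx
  have hxk : ∀ k, x k ∈ spaceS (L k) (Ahd k) (Ahr k) := fun k =>
    Fintype.mem_piFinset.mp hx k
  have hJE : ∀ w, ∑ x' ∈ jointSpace L Ahd Ahr,
      Pjoint lam L Ahd Ahr x x' w * (∑ k, Vk k (x' k)) =
      ∑ j, expAct (lam j) (L j) (Ahd j) (Ahr j) (Vk j) (x j) (w j) :=
    joint_exp lam L Ahd Ahr hL hAd Vk hx
  simp only [hJE]
  have hPS := policy_sum q hq1 p hp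
    (fun j a => expAct (lam j) (L j) (Ahd j) (Ahr j) (Vk j) (x j) a)
  simp only [hPS]
  have hinf := inf'_sum_bool (fun j b =>
    p j * expAct (lam j) (L j) (Ahd j) (Ahr j) (Vk j) (x j)
        (if b then Act.new else Act.cont) +
      (1 - p j) * expAct (lam j) (L j) (Ahd j) (Ahr j) (Vk j) (x j) Act.idle)
  rw [hinf, ← Finset.sum_add_distrib, ← Finset.sum_add_distrib]
  refine Finset.sum_congr rfl fun j _ => ?_
  rw [hbell j (x j) (hxk j)]
  simp [expAct]

end AoI
end

section
/- The per-device Bellman update under a semi-randomized base policy preserves monotonicity (induction step of Lemma 4). Fix a device k and p ∈ [0,1], and for V : X_k → ℝ define (T̂_k V)(X_k) = A_r + min_{v∈{1,2}} [ p·(λ_k·V(X^{(v)}_{k,s}) + (1−λ_k)·V(X^{(v)}_{k,f})) + (1−p)·V(X_{k,un}) ] for X_k = (A_d, A_r, D) ∈ X_k. If V(X¹_k) ≤ V(X²_k) whenever X¹_k ⪯_k X²_k, then (T̂_k V)(X¹_k) ≤ (T̂_k V)(X²_k) whenever X¹_k ⪯_k X²_k. -/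
namespace AoI

/-- Per-device Bellman operator under a semi-randomized base policy scheduling
the device with probability `p`. -/
def Tdev (lam p : ℝ) (L Ahd Ahr : ℕ) (V : S → ℝ) (x : S) : ℝ :=
  (x.2.1 : ℝ) +
    min
      (p * (lam * V (sCont L Ahd Ahr x) + (1 - lam) * V (fCont Ahd Ahr x)) +
        (1 - p) * V (fCont Ahd Ahr x))
      (p * (lam * V (sNew L Ahr x) + (1 - lam) * V (fNew L Ahr x)) +
        (1 - p) * V (fCont Ahd Ahr x))

/-- induction step of Lemma 4: the per-device Bellman update
under a semi-randomized base policy preserves monotonicity. -/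
theorem per_device_bellman_preserves_monotonicity
    (K : ℕ) (hK : 1 ≤ K) (k : Fin K)
    (lam : Fin K → ℝ) (L Ahd Ahr : Fin K → ℕ)
    (hlam : ∀ j, 0 < lam j ∧ lam j ≤ 1)
    (hL : ∀ j, 2 ≤ L j) (hAd : ∀ j, 1 ≤ Ahd j) (hAr : ∀ j, 1 ≤ Ahr j)
    (p : ℝ) (hp : 0 ≤ p ∧ p ≤ 1)
    (V : S → ℝ)
    (hV : ∀ x1 ∈ spaceS (L k) (Ahd k) (Ahr k),
      ∀ x2 ∈ spaceS (L k) (Ahd k) (Ahr k), xleS x1 x2 → V x1 ≤ V x2) :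
    ∀ x1 ∈ spaceS (L k) (Ahd k) (Ahr k),
      ∀ x2 ∈ spaceS (L k) (Ahd k) (Ahr k), xleS x1 x2 →
        Tdev (lam k) p (L k) (Ahd k) (Ahr k) V x1 ≤
          Tdev (lam k) p (L k) (Ahd k) (Ahr k) V x2 := by
  intro x1 hx1 x2 hx2 hle
  obtain ⟨h1, h2, h3⟩ := hle
  obtain ⟨hx1d, hx1r, hx1D1, hx1DL⟩ := mem_spaceS.mp hx1
  obtain ⟨hx2d, hx2r, hx2D1, hx2DL⟩ := mem_spaceS.mp hx2
  have hl0 : 0 ≤ lam k := le_of_lt (hlam k).1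
  have hl1 : 0 ≤ 1 - lam k := by linarith [(hlam k).2]
  have hp0 := hp.1
  have hp1 : 0 ≤ 1 - p := by linarith [hp.2]
  have hLk := hL k
  have hAdk := hAd k
  have hArk := hAr k
  have VfC : V (fCont (Ahd k) (Ahr k) x1) ≤ V (fCont (Ahd k) (Ahr k) x2) := by
    apply hV
    · simp only [fCont, mem_spaceS, Prod.fst, Prod.snd]
      exact ⟨min_le_right _ _, min_le_right _ _, hx1D1, hx1DL⟩
    · simp only [fCont, mem_spaceS, Prod.fst, Prod.snd]
      exact ⟨min_le_right _ _, min_le_right _ _, hx2D1, hx2DL⟩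
    · simp only [fCont, xleS, Prod.fst, Prod.snd]
      exact ⟨min_le_min (by omega) le_rfl, min_le_min (by omega) le_rfl, h3⟩
  have VsC : V (sCont (L k) (Ahd k) (Ahr k) x1) ≤ V (sCont (L k) (Ahd k) (Ahr k) x2) := by
    by_cases hD : x1.2.2 = 1
    · have hD2 : x2.2.2 = 1 := h3 ▸ hD
      apply hV
      · simp only [sCont, hD, if_pos, mem_spaceS, Prod.fst, Prod.snd]
        exact ⟨Nat.zero_le _, min_le_right _ _, by omega, le_rfl⟩
      · simp only [sCont, hD2, if_pos, mem_spaceS, Prod.fst, Prod.snd]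
        exact ⟨Nat.zero_le _, min_le_right _ _, by omega, le_rfl⟩
      · simp only [sCont, hD, hD2, if_pos, xleS, Prod.fst, Prod.snd]
        exact ⟨le_rfl, min_le_min (by omega) le_rfl, trivial⟩
    · have hD2 : ¬ x2.2.2 = 1 := h3 ▸ hD
      apply hV
      · simp only [sCont, if_neg hD, mem_spaceS, Prod.fst, Prod.snd]
        exact ⟨min_le_right _ _, min_le_right _ _, by omega, by omega⟩
      · simp only [sCont, if_neg hD2, mem_spaceS, Prod.fst, Prod.snd]
        exact ⟨min_le_right _ _, min_le_right _ _, by omega, by omega⟩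
      · simp only [sCont, if_neg hD, if_neg hD2, xleS, Prod.fst, Prod.snd]
        exact ⟨min_le_min (by omega) le_rfl, min_le_min (by omega) le_rfl, by omega⟩
  have VsN : V (sNew (L k) (Ahr k) x1) ≤ V (sNew (L k) (Ahr k) x2) := by
    apply hV
    · simp only [sNew, mem_spaceS, Prod.fst, Prod.snd]
      exact ⟨hAdk, min_le_right _ _, by omega, by omega⟩
    · simp only [sNew, mem_spaceS, Prod.fst, Prod.snd]
      exact ⟨hAdk, min_le_right _ _, by omega, by omega⟩
    · simp only [sNew, xleS, Prod.fst, Prod.snd]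
      exact ⟨le_rfl, min_le_min (by omega) le_rfl, trivial⟩
  have VfN : V (fNew (L k) (Ahr k) x1) ≤ V (fNew (L k) (Ahr k) x2) := by
    apply hV
    · simp only [fNew, mem_spaceS, Prod.fst, Prod.snd]
      exact ⟨Nat.zero_le _, min_le_right _ _, by omega, le_rfl⟩
    · simp only [fNew, mem_spaceS, Prod.fst, Prod.snd]
      exact ⟨Nat.zero_le _, min_le_right _ _, by omega, le_rfl⟩
    · simp only [fNew, xleS, Prod.fst, Prod.snd]
      exact ⟨le_rfl, min_le_min (by omega) le_rfl, trivial⟩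
  unfold Tdev
  have hr : (x1.2.1 : ℝ) ≤ (x2.2.1 : ℝ) := by exact_mod_cast h2
  apply add_le_add hr
  apply min_le_min
  · nlinarith [mul_le_mul_of_nonneg_left VsC hl0, mul_le_mul_of_nonneg_left VfC hl1,
      mul_le_mul_of_nonneg_left VfC hp1]
  · nlinarith [mul_le_mul_of_nonneg_left VsN hl0, mul_le_mul_of_nonneg_left VfN hl1,
      mul_le_mul_of_nonneg_left VfC hp1]

end AoI
end

section
/- Monotonicity of the per-device value function (Lemma 4). Fix a device k, p ∈ [0,1] and a reference state X†_k ∈ X_k, and define (T̂_k V)(X_k) = A_r + min_{v∈{1,2}} [ p·(λ_k·V(X^{(v)}_{k,s}) + (1−λ_k)·V(X^{(v)}_{k,f})) + (1−p)·V(X_{k,un}) ] for X_k = (A_d, A_r, D). Define the per-device relative value iteration by V_1 ≡ 0 and V_{n+1}(X_k) = (T̂_k V_n)(X_k) − (T̂_k V_n)(X†_k) for n ≥ 1. Then every iterate V_n is monotone with respect to ⪯_k, and any pointwise limit V̂_k of the sequence satisfies V̂_k(X²_k) ≥ V̂_k(X¹_k) for all X¹_k, X²_k ∈ X_k with A²_d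 ≥ A¹_d, A²_r ≥ A¹_r and D² = D¹. -/
namespace AoI

lemma xleS_fCont {Ahd Ahr : ℕ} {x y : S} (h : xleS x y) :
    xleS (fCont Ahd Ahr x) (fCont Ahd Ahr y) := by
  obtain ⟨h1, h2, h3⟩ := h
  exact ⟨by unfold fCont; dsimp; omega, by unfold fCont; dsimp; omega,
    by unfold fCont; dsimp; omega⟩

lemma xleS_sCont {L Ahd Ahr : ℕ} {x y : S} (h : xleS x y) :
    xleS (sCont L Ahd Ahr x) (sCont L Ahd Ahr y) := by
  obtain ⟨h1, h2, h3⟩ := h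
  unfold sCont xleS
  rw [h3]
  split <;> dsimp <;> omega

lemma xleS_sNew {L Ahr : ℕ} {x y : S} (h : xleS x y) :
    xleS (sNew L Ahr x) (sNew L Ahr y) := by
  obtain ⟨h1, h2, h3⟩ := h
  exact ⟨le_rfl, by unfold sNew; dsimp; omega, rfl⟩

lemma xleS_fNew {L Ahr : ℕ} {x y : S} (h : xleS x y) :
    xleS (fNew L Ahr x) (fNew L Ahr y) := by
  obtain ⟨h1, h2, h3⟩ := h
  exact ⟨le_rfl, by unfold fNew; dsimp; omega, rfl⟩

lemma Tdev_mono {lam p : ℝ} {L Ahd Ahr : ℕ}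
    (hlam : 0 < lam ∧ lam ≤ 1) (hp : 0 ≤ p ∧ p ≤ 1)
    (hL : 2 ≤ L) (hAd : 1 ≤ Ahd)
    (V : S → ℝ)
    (hV : ∀ x1 ∈ spaceS L Ahd Ahr, ∀ x2 ∈ spaceS L Ahd Ahr,
      xleS x1 x2 → V x1 ≤ V x2)
    {x1 x2 : S} (h1 : x1 ∈ spaceS L Ahd Ahr) (h2 : x2 ∈ spaceS L Ahd Ahr)
    (hle : xleS x1 x2) :
    Tdev lam p L Ahd Ahr V x1 ≤ Tdev lam p L Ahd Ahr V x2 := by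
  have hsc := hV _ (sCont_mem hL h1) _ (sCont_mem hL h2) (xleS_sCont hle)
  have hfc := hV _ (fCont_mem h1) _ (fCont_mem h2) (xleS_fCont hle)
  have hsn := hV _ (sNew_mem hL hAd h1) _ (sNew_mem hL hAd h2) (xleS_sNew hle)
  have hfn := hV _ (fNew_mem hL h1) _ (fNew_mem hL h2) (xleS_fNew hle)
  have har : (x1.2.1 : ℝ) ≤ (x2.2.1 : ℝ) := by exact_mod_cast hle.2.1
  unfold Tdev
  refine add_le_add har (min_le_min ?_ ?_) <;> gcongr <;> linarith [hlam.1, hlam.2, hp.1, hp.2]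

/-- Lemma 4: monotonicity of the per-device value function. Every
iterate of the per-device relative value iteration `V_1 ≡ 0`,
`V_{n+1} = T̂_k V_n − (T̂_k V_n)(X†_k)` is monotone w.r.t. `⪯ₖ`, and any
pointwise limit of the sequence is monotone. -/
theorem per_device_value_function_monotone
    (K : ℕ) (hK : 1 ≤ K) (k : Fin K)
    (lam : Fin K → ℝ) (L Ahd Ahr : Fin K → ℕ)
    (hlam : ∀ j, 0 < lam j ∧ lam j ≤ 1)
    (hL : ∀ j, 2 ≤ L j) (hAd : ∀ j, 1 ≤ Ahd j) (hAr : ∀ j, 1 ≤ Ahr j)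
    (p : ℝ) (hp : 0 ≤ p ∧ p ≤ 1)
    (Xdag : S) (hdag : Xdag ∈ spaceS (L k) (Ahd k) (Ahr k))
    (Vseq : ℕ → S → ℝ)
    (hinit : ∀ x, Vseq 1 x = 0)
    (hrec : ∀ n, 1 ≤ n → ∀ x, Vseq (n + 1) x =
      Tdev (lam k) p (L k) (Ahd k) (Ahr k) (Vseq n) x -
        Tdev (lam k) p (L k) (Ahd k) (Ahr k) (Vseq n) Xdag) :
    (∀ n, 1 ≤ n → ∀ x1 ∈ spaceS (L k) (Ahd k) (Ahr k),
      ∀ x2 ∈ spaceS (L k) (Ahd k) (Ahr k), xleS x1 x2 → Vseq n x1 ≤ Vseq n x2) ∧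
    (∀ Vhat : S → ℝ,
      (∀ x, Filter.Tendsto (fun n => Vseq n x) Filter.atTop (nhds (Vhat x))) →
      ∀ x1 ∈ spaceS (L k) (Ahd k) (Ahr k),
        ∀ x2 ∈ spaceS (L k) (Ahd k) (Ahr k), xleS x1 x2 → Vhat x1 ≤ Vhat x2) := by
  have mono : ∀ n, 1 ≤ n → ∀ x1 ∈ spaceS (L k) (Ahd k) (Ahr k),
      ∀ x2 ∈ spaceS (L k) (Ahd k) (Ahr k), xleS x1 x2 → Vseq n x1 ≤ Vseq n x2 := by
    intro n hn
    induction n, hn using Nat.le_induction with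
    | base => intro x1 _ x2 _ _; simp [hinit]
    | succ n hn ih =>
      intro x1 h1 x2 h2 hle
      rw [hrec n hn, hrec n hn]
      have := Tdev_mono (hlam k) hp (hL k) (hAd k) (Vseq n) ih h1 h2 hle
      linarith
  refine ⟨mono, ?_⟩
  intro Vhat hV x1 h1 x2 h2 hle
  exact le_of_tendsto_of_tendsto (hV x1) (hV x2)
    (Filter.eventually_atTop.mpr ⟨1, fun n hn => mono n hn x1 h1 x2 h2 hle⟩)

end AoI
end

section
/- Monotonicity of the value function for the random-arrival model (Lemma 5). If V : X → ℝ is monotone with respect to ⪯, then the Bellman-updated function X ↦ min_{w∈W} J_V(X, w) is also monotone with respect to ⪯. Consequently, fixing a reference state X† ∈ X, every iterate of the relative value iteration V_1 ≡ 0, V_{n+1}(X) = min_{w∈W} J_{V_n}(X, w) − min_{w∈W} J_{V_n}(X†, w) is monotone, and any pointwise limit V of the sequence satisfies: for X¹, X² ∈ X with A²_{b,k} ≥ A¹_{b,k}, A²_{d,k} ≥ A¹_{d,k}, A²_{r,k} ≥ A¹_{r,k} and D²_k = D¹_k for all k, V(X²) ≥ V(X¹). -/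
namespace AoIRandom

/-- Per-device control action: idle `(0,0)`, continue the current
in-transmission update `(1,1)`, or start transmitting the buffered update
`(1,2)`. -/
inductive Act : Type
  | idle : Act
  | cont : Act
  | new  : Act
  deriving DecidableEq

instance : Fintype Act :=
  ⟨{Act.idle, Act.cont, Act.new}, by intro a; cases a <;> simp⟩

/-- Per-device state `(A_b, A_d, A_r, D)`. -/
abbrev S : Type := ℕ × ℕ × ℕ × ℕ

/-- Success successor under `(1,1)` when a new update arrives. -/
def sCont1 (L Ahd Ahr : ℕ) (x : S) : S :=
  if x.2.2.2 = 1 then (1, 1, min (x.2.1 + 1) Ahr, L)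
  else (1, min (x.2.1 + 1) Ahd, min (x.2.2.1 + 1) Ahr, x.2.2.2 - 1)

/-- Success successor under `(1,1)` when no update arrives. -/
def sCont2 (L Ahb Ahd Ahr : ℕ) (x : S) : S :=
  if x.2.2.2 = 1 then
    (min (x.1 + 1) Ahb, min (x.1 + 1) Ahd, min (x.2.1 + 1) Ahr, L)
  else
    (min (x.1 + 1) Ahb, min (x.2.1 + 1) Ahd, min (x.2.2.1 + 1) Ahr, x.2.2.2 - 1)

/-- Failure successor under `(1,1)` when a new update arrives; this is also the
unscheduled successor `X¹_{k,un}` under `(0,0)`. -/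
def fCont1 (Ahd Ahr : ℕ) (x : S) : S :=
  (1, min (x.2.1 + 1) Ahd, min (x.2.2.1 + 1) Ahr, x.2.2.2)

/-- Failure successor under `(1,1)` when no update arrives; this is also the
unscheduled successor `X²_{k,un}` under `(0,0)`. -/
def fCont2 (Ahb Ahd Ahr : ℕ) (x : S) : S :=
  (min (x.1 + 1) Ahb, min (x.2.1 + 1) Ahd, min (x.2.2.1 + 1) Ahr, x.2.2.2)

/-- Success successor under `(1,2)` when a new update arrives. -/
def sNew1 (L Ahr : ℕ) (x : S) : S := (1, 1, min (x.2.2.1 + 1) Ahr, L - 1)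

/-- Success successor under `(1,2)` when no update arrives. -/
def sNew2 (L Ahb Ahd Ahr : ℕ) (x : S) : S :=
  (min (x.1 + 1) Ahb, min (x.1 + 1) Ahd, min (x.2.2.1 + 1) Ahr, L - 1)

/-- Failure successor under `(1,2)` when a new update arrives. -/
def fNew1 (L Ahr : ℕ) (x : S) : S := (1, 1, min (x.2.2.1 + 1) Ahr, L)

/-- Failure successor under `(1,2)` when no update arrives. -/
def fNew2 (L Ahb Ahd Ahr : ℕ) (x : S) : S :=
  (min (x.1 + 1) Ahb, min (x.1 + 1) Ahd, min (x.2.2.1 + 1) Ahr, L)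

/-- Per-device transition kernel `P_k(x' | x, a)` in the random-arrival model. -/
def Pk (lam rho : ℝ) (L Ahb Ahd Ahr : ℕ) (x x' : S) : Act → ℝ
  | Act.idle =>
      rho * (if x' = fCont1 Ahd Ahr x then 1 else 0) +
        (1 - rho) * (if x' = fCont2 Ahb Ahd Ahr x then 1 else 0)
  | Act.cont =>
      rho * lam * (if x' = sCont1 L Ahd Ahr x then 1 else 0) +
        rho * (1 - lam) * (if x' = fCont1 Ahd Ahr x then 1 else 0) +
        (1 - rho) * lam * (if x' = sCont2 L Ahb Ahd Ahr x then 1 else 0) +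
        (1 - rho) * (1 - lam) * (if x' = fCont2 Ahb Ahd Ahr x then 1 else 0)
  | Act.new =>
      rho * lam * (if x' = sNew1 L Ahr x then 1 else 0) +
        rho * (1 - lam) * (if x' = fNew1 L Ahr x then 1 else 0) +
        (1 - rho) * lam * (if x' = sNew2 L Ahb Ahd Ahr x then 1 else 0) +
        (1 - rho) * (1 - lam) * (if x' = fNew2 L Ahb Ahd Ahr x then 1 else 0)

/-- Per-device state space `{0,…,Âb} × {0,…,Âd} × {0,…,Âr} × {1,…,L}`. -/
def spaceS (L Ahb Ahd Ahr : ℕ) : Finset S :=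
  Finset.range (Ahb + 1) ×ˢ
    (Finset.range (Ahd + 1) ×ˢ (Finset.range (Ahr + 1) ×ˢ Finset.Icc 1 L))

/-- Joint state space `X = X_1 × ⋯ × X_K`. -/
def jointSpace {K : ℕ} (L Ahb Ahd Ahr : Fin K → ℕ) : Finset (Fin K → S) :=
  Fintype.piFinset fun k => spaceS (L k) (Ahb k) (Ahd k) (Ahr k)

/-- Joint transition kernel `P(X' | X, w) = ∏ₖ P_k(X'_k | X_k, w_k)`. -/
def Pjoint {K : ℕ} (lam rho : Fin K → ℝ) (L Ahb Ahd Ahr : Fin K → ℕ)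
    (x x' : Fin K → S) (w : Fin K → Act) : ℝ :=
  ∏ k, Pk (lam k) (rho k) (L k) (Ahb k) (Ahd k) (Ahr k) (x k) (x' k) (w k)

/-- Feasible joint actions: at most `M` devices are scheduled. -/
def feasible (K M : ℕ) : Finset (Fin K → Act) :=
  Finset.univ.filter fun w => (Finset.univ.filter fun k => w k ≠ Act.idle).card ≤ M

lemma feasible_nonempty (K M : ℕ) : (feasible K M).Nonempty := by
  refine ⟨fun _ => Act.idle, Finset.mem_filter.mpr ⟨Finset.mem_univ _, ?_⟩⟩
  simp

/-- The state–action cost `J_V(X, w) = Σₖ A_{r,k} + Σ_{X'∈X} P(X'|X,w) V(X')`. -/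
def J {K : ℕ} (lam rho : Fin K → ℝ) (L Ahb Ahd Ahr : Fin K → ℕ)
    (V : (Fin K → S) → ℝ) (x : Fin K → S) (w : Fin K → Act) : ℝ :=
  (∑ k, ((x k).2.2.1 : ℝ)) +
    ∑ x' ∈ jointSpace L Ahb Ahd Ahr, Pjoint lam rho L Ahb Ahd Ahr x x' w * V x'

/-- Componentwise order on per-device states: `A¹_b ≤ A²_b`, `A¹_d ≤ A²_d`,
`A¹_r ≤ A²_r` and `D¹ = D²`. -/
def xleS (x y : S) : Prop :=
  x.1 ≤ y.1 ∧ x.2.1 ≤ y.2.1 ∧ x.2.2.1 ≤ y.2.2.1 ∧ x.2.2.2 = y.2.2.2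


/-!
Split every device transition into its four branches (arrival or not, success or not). Each
branch successor is monotone in the state for the componentwise order and stays in the state
space, and the branch probabilities do not depend on the state. Hence `J_V(X, w)` is the
monotone cost `Σₖ A_{r,k}` plus a nonnegative combination of values of the monotone `V` at
monotone successors, so it is monotone for every fixed `w`, and so is its minimum over `W`.
Subtracting the constant `min_w J_{V_n}(X†, w)` preserves monotonicity, and monotonicity is
closed under pointwise limits.
-/

/-- The branch `(true, _)` is an arrival, `(_, true)` a successful transmission; the idle action
ignores the second flag. -/
def branchSucc (L Ahb Ahd Ahr : ℕ) : Act → Bool × Bool → S → S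
  | Act.idle, (true, _) => fCont1 Ahd Ahr
  | Act.idle, (false, _) => fCont2 Ahb Ahd Ahr
  | Act.cont, (true, true) => sCont1 L Ahd Ahr
  | Act.cont, (true, false) => fCont1 Ahd Ahr
  | Act.cont, (false, true) => sCont2 L Ahb Ahd Ahr
  | Act.cont, (false, false) => fCont2 Ahb Ahd Ahr
  | Act.new, (true, true) => sNew1 L Ahr
  | Act.new, (true, false) => fNew1 L Ahr
  | Act.new, (false, true) => sNew2 L Ahb Ahd Ahr
  | Act.new, (false, false) => fNew2 L Ahb Ahd Ahr

def branchProb (lam rho : ℝ) (b : Bool × Bool) : ℝ :=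
  (if b.1 then rho else 1 - rho) * (if b.2 then lam else 1 - lam)

lemma branchProb_nonneg {lam rho : ℝ} (hlam : 0 ≤ lam ∧ lam ≤ 1) (hrho : 0 ≤ rho ∧ rho ≤ 1)
    (b : Bool × Bool) : 0 ≤ branchProb lam rho b := by
  unfold branchProb
  apply mul_nonneg <;> split_ifs <;> linarith

lemma Pk_eq_sum_branch (lam rho : ℝ) (L Ahb Ahd Ahr : ℕ) (x x' : S) (a : Act) :
    Pk lam rho L Ahb Ahd Ahr x x' a =
      ∑ b : Bool × Bool, branchProb lam rho b *
        if x' = branchSucc L Ahb Ahd Ahr a b x then 1 else 0 := by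
  -- `simp only [branchSucc]` would rewrite the condition of each `if` but not the `Decidable`
  -- instance mentioning it, and `ring` would then see atoms different from those of `Pk`.
  cases a <;> simp only [Fintype.sum_prod_type, Fintype.sum_bool] <;> delta branchSucc <;>
    simp only [Pk, branchProb, if_true, Bool.false_eq_true, if_false] <;> ring

lemma mem_spaceS_iff {L Ahb Ahd Ahr : ℕ} {x : S} :
    x ∈ spaceS L Ahb Ahd Ahr ↔
      x.1 ≤ Ahb ∧ x.2.1 ≤ Ahd ∧ x.2.2.1 ≤ Ahr ∧ 1 ≤ x.2.2.2 ∧ x.2.2.2 ≤ L := by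
  simp [spaceS]

lemma branchSucc_mem_spaceS {L Ahb Ahd Ahr : ℕ} (hL : 2 ≤ L) (hAb : 1 ≤ Ahb) (hAd : 1 ≤ Ahd)
    (a : Act) (b : Bool × Bool) {x : S} (hx : x ∈ spaceS L Ahb Ahd Ahr) :
    branchSucc L Ahb Ahd Ahr a b x ∈ spaceS L Ahb Ahd Ahr := by
  rw [mem_spaceS_iff] at hx
  obtain ⟨b1, b2⟩ := b
  cases a <;> cases b1 <;> cases b2 <;>
    simp only [branchSucc, sCont1, sCont2, fCont1, fCont2, sNew1, sNew2, fNew1, fNew2] <;>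
    (try split_ifs) <;> simp only [mem_spaceS_iff] <;> omega

lemma xleS_branchSucc {L Ahb Ahd Ahr : ℕ} (a : Act) (b : Bool × Bool) {x y : S}
    (hxy : xleS x y) : xleS (branchSucc L Ahb Ahd Ahr a b x) (branchSucc L Ahb Ahd Ahr a b y) := by
  obtain ⟨b1, b2⟩ := b
  unfold xleS at hxy
  cases a <;> cases b1 <;> cases b2 <;>
    simp only [branchSucc, sCont1, sCont2, fCont1, fCont2, sNew1, sNew2, fNew1, fNew2] <;>
    (try split_ifs) <;> simp only [xleS] <;> constructorm* _ ∧ _, True <;> omega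

section Joint

open Filter Topology

variable {K : ℕ} (lam rho : Fin K → ℝ) (L Ahb Ahd Ahr : Fin K → ℕ)

def jointSucc (w : Fin K → Act) (β : Fin K → Bool × Bool) (x : Fin K → S) : Fin K → S :=
  fun k => branchSucc (L k) (Ahb k) (Ahd k) (Ahr k) (w k) (β k) (x k)

def StateMonotone (V : (Fin K → S) → ℝ) : Prop :=
  ∀ x1 ∈ jointSpace L Ahb Ahd Ahr, ∀ x2 ∈ jointSpace L Ahb Ahd Ahr,
    (∀ k, xleS (x1 k) (x2 k)) → V x1 ≤ V x2

def bellman (M : ℕ) (V : (Fin K → S) → ℝ) (x : Fin K → S) : ℝ :=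
  (feasible K M).inf' (feasible_nonempty K M) (J lam rho L Ahb Ahd Ahr V x)

variable {L Ahb Ahd Ahr}

lemma jointSucc_mem_jointSpace (hL : ∀ k, 2 ≤ L k) (hAb : ∀ k, 1 ≤ Ahb k)
    (hAd : ∀ k, 1 ≤ Ahd k) (w : Fin K → Act) (β : Fin K → Bool × Bool) {x : Fin K → S}
    (hx : x ∈ jointSpace L Ahb Ahd Ahr) :
    jointSucc L Ahb Ahd Ahr w β x ∈ jointSpace L Ahb Ahd Ahr :=
  Fintype.mem_piFinset.mpr fun k =>
    branchSucc_mem_spaceS (hL k) (hAb k) (hAd k) _ _ (Fintype.mem_piFinset.mp hx k)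

lemma Pjoint_eq_sum_branch (x x' : Fin K → S) (w : Fin K → Act) :
    Pjoint lam rho L Ahb Ahd Ahr x x' w =
      ∑ β : Fin K → Bool × Bool, (∏ k, branchProb (lam k) (rho k) (β k)) *
        if x' = jointSucc L Ahb Ahd Ahr w β x then 1 else 0 := by
  simp only [Pjoint, Pk_eq_sum_branch, Fintype.prod_sum]
  refine Finset.sum_congr rfl fun β _ => ?_
  simp only [Finset.prod_mul_distrib, Finset.prod_boole, Finset.mem_univ, true_implies,
    jointSucc, funext_iff]

lemma sum_Pjoint_mul_eq_sum_branch (hL : ∀ k, 2 ≤ L k) (hAb : ∀ k, 1 ≤ Ahb k)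
    (hAd : ∀ k, 1 ≤ Ahd k) (V : (Fin K → S) → ℝ) {x : Fin K → S}
    (hx : x ∈ jointSpace L Ahb Ahd Ahr) (w : Fin K → Act) :
    ∑ x' ∈ jointSpace L Ahb Ahd Ahr, Pjoint lam rho L Ahb Ahd Ahr x x' w * V x' =
      ∑ β : Fin K → Bool × Bool,
        (∏ k, branchProb (lam k) (rho k) (β k)) * V (jointSucc L Ahb Ahd Ahr w β x) := by
  simp only [Pjoint_eq_sum_branch, Finset.sum_mul]
  rw [Finset.sum_comm]
  refine Finset.sum_congr rfl fun β _ => ?_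
  simp only [mul_assoc, ite_mul, one_mul, zero_mul, mul_ite, mul_zero]
  rw [Finset.sum_ite_eq' _ _ (fun x' => _ * V x'),
    if_pos (jointSucc_mem_jointSpace hL hAb hAd w β hx)]

variable {lam rho}

lemma J_le_J_of_stateMonotone (hlam : ∀ k, 0 ≤ lam k ∧ lam k ≤ 1)
    (hrho : ∀ k, 0 ≤ rho k ∧ rho k ≤ 1) (hL : ∀ k, 2 ≤ L k) (hAb : ∀ k, 1 ≤ Ahb k)
    (hAd : ∀ k, 1 ≤ Ahd k) {V : (Fin K → S) → ℝ} (hV : StateMonotone L Ahb Ahd Ahr V)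
    {x1 x2 : Fin K → S} (hx1 : x1 ∈ jointSpace L Ahb Ahd Ahr) (hx2 : x2 ∈ jointSpace L Ahb Ahd Ahr)
    (hle : ∀ k, xleS (x1 k) (x2 k)) (w : Fin K → Act) :
    J lam rho L Ahb Ahd Ahr V x1 w ≤ J lam rho L Ahb Ahd Ahr V x2 w := by
  unfold J
  rw [sum_Pjoint_mul_eq_sum_branch lam rho hL hAb hAd V hx1,
    sum_Pjoint_mul_eq_sum_branch lam rho hL hAb hAd V hx2]
  gcongr with k _ β _
  · exact (hle k).2.2.1
  · exact Finset.prod_nonneg fun k _ => branchProb_nonneg (hlam k) (hrho k) (β k)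
  · exact hV _ (jointSucc_mem_jointSpace hL hAb hAd w β hx1) _
      (jointSucc_mem_jointSpace hL hAb hAd w β hx2) fun k => xleS_branchSucc _ _ (hle k)

lemma stateMonotone_bellman (M : ℕ) (hlam : ∀ k, 0 ≤ lam k ∧ lam k ≤ 1)
    (hrho : ∀ k, 0 ≤ rho k ∧ rho k ≤ 1) (hL : ∀ k, 2 ≤ L k) (hAb : ∀ k, 1 ≤ Ahb k)
    (hAd : ∀ k, 1 ≤ Ahd k) {V : (Fin K → S) → ℝ} (hV : StateMonotone L Ahb Ahd Ahr V) :
    StateMonotone L Ahb Ahd Ahr (bellman lam rho L Ahb Ahd Ahr M V) :=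
  fun _ hx1 _ hx2 hle => Finset.inf'_mono_fun fun w _ =>
    J_le_J_of_stateMonotone hlam hrho hL hAb hAd hV hx1 hx2 hle w

lemma stateMonotone_relativeValueIteration (M : ℕ) (hlam : ∀ k, 0 ≤ lam k ∧ lam k ≤ 1)
    (hrho : ∀ k, 0 ≤ rho k ∧ rho k ≤ 1) (hL : ∀ k, 2 ≤ L k) (hAb : ∀ k, 1 ≤ Ahb k)
    (hAd : ∀ k, 1 ≤ Ahd k) (Xdag : Fin K → S) {Vseq : ℕ → (Fin K → S) → ℝ}
    (hinit : ∀ x, Vseq 1 x = 0)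
    (hrec : ∀ n, 1 ≤ n → ∀ x, Vseq (n + 1) x =
      bellman lam rho L Ahb Ahd Ahr M (Vseq n) x - bellman lam rho L Ahb Ahd Ahr M (Vseq n) Xdag)
    {n : ℕ} (hn : 1 ≤ n) : StateMonotone L Ahb Ahd Ahr (Vseq n) := by
  induction n, hn using Nat.le_induction with
  | base => intro x1 _ x2 _ _; rw [hinit x1, hinit x2]
  | succ n hn ih =>
    intro x1 hx1 x2 hx2 hle
    rw [hrec n hn x1, hrec n hn x2]
    exact sub_le_sub_right (stateMonotone_bellman M hlam hrho hL hAb hAd ih _ hx1 _ hx2 hle) _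

lemma StateMonotone.of_tendsto {ι : Type*} {l : Filter ι} [l.NeBot]
    {Vseq : ι → (Fin K → S) → ℝ} {Vlim : (Fin K → S) → ℝ}
    (hmono : ∀ᶠ i in l, StateMonotone L Ahb Ahd Ahr (Vseq i))
    (hlim : ∀ x, Tendsto (fun i => Vseq i x) l (𝓝 (Vlim x))) :
    StateMonotone L Ahb Ahd Ahr Vlim :=
  fun x1 hx1 x2 hx2 hle => le_of_tendsto_of_tendsto (hlim x1) (hlim x2) <|
    hmono.mono fun _ hV => hV x1 hx1 x2 hx2 hle

end Joint

theorem value_function_monotone_random_general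
    (K M : ℕ)
    (lam rho : Fin K → ℝ) (L Ahb Ahd Ahr : Fin K → ℕ)
    (hlam : ∀ k, 0 < lam k ∧ lam k ≤ 1) (hrho : ∀ k, 0 ≤ rho k ∧ rho k ≤ 1)
    (hL : ∀ k, 2 ≤ L k) (hAb : ∀ k, 1 ≤ Ahb k)
    (hAd : ∀ k, 1 ≤ Ahd k)
    (Xdag : Fin K → S)
    (Vseq : ℕ → (Fin K → S) → ℝ)
    (hinit : ∀ x, Vseq 1 x = 0)
    (hrec : ∀ n, 1 ≤ n → ∀ x, Vseq (n + 1) x =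
      (feasible K M).inf' (feasible_nonempty K M)
          (fun w => J lam rho L Ahb Ahd Ahr (Vseq n) x w) -
        (feasible K M).inf' (feasible_nonempty K M)
          (fun w => J lam rho L Ahb Ahd Ahr (Vseq n) Xdag w)) :
    (∀ V : (Fin K → S) → ℝ,
      (∀ x1 ∈ jointSpace L Ahb Ahd Ahr, ∀ x2 ∈ jointSpace L Ahb Ahd Ahr,
        (∀ k, xleS (x1 k) (x2 k)) → V x1 ≤ V x2) →
      ∀ x1 ∈ jointSpace L Ahb Ahd Ahr, ∀ x2 ∈ jointSpace L Ahb Ahd Ahr,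
        (∀ k, xleS (x1 k) (x2 k)) →
          (feasible K M).inf' (feasible_nonempty K M)
              (fun w => J lam rho L Ahb Ahd Ahr V x1 w) ≤
            (feasible K M).inf' (feasible_nonempty K M)
              (fun w => J lam rho L Ahb Ahd Ahr V x2 w)) ∧
    (∀ n, 1 ≤ n → ∀ x1 ∈ jointSpace L Ahb Ahd Ahr,
      ∀ x2 ∈ jointSpace L Ahb Ahd Ahr,
        (∀ k, xleS (x1 k) (x2 k)) → Vseq n x1 ≤ Vseq n x2) ∧
    (∀ Vlim : (Fin K → S) → ℝ,
      (∀ x, Filter.Tendsto (fun n => Vseq n x) Filter.atTop (nhds (Vlim x))) →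
      ∀ x1 ∈ jointSpace L Ahb Ahd Ahr, ∀ x2 ∈ jointSpace L Ahb Ahd Ahr,
        (∀ k, xleS (x1 k) (x2 k)) → Vlim x1 ≤ Vlim x2) := by
  have hlam' : ∀ k, 0 ≤ lam k ∧ lam k ≤ 1 := fun k => ⟨(hlam k).1.le, (hlam k).2⟩
  have hiter : ∀ n, 1 ≤ n → StateMonotone L Ahb Ahd Ahr (Vseq n) := fun _ hn =>
    stateMonotone_relativeValueIteration M hlam' hrho hL hAb hAd Xdag hinit hrec hn
  refine ⟨fun V hV => stateMonotone_bellman M hlam' hrho hL hAb hAd hV, hiter, fun Vlim hlim => ?_⟩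
  exact StateMonotone.of_tendsto (Filter.eventually_ge_atTop 1 |>.mono hiter) hlim

/-- Lemma 5: the Bellman update preserves monotonicity in the
random-arrival model; consequently every relative-value-iteration iterate is
monotone and any pointwise limit of the sequence is monotone. -/
theorem value_function_monotone_random
    (K M : ℕ) (hK : 1 ≤ K) (hM1 : 1 ≤ M) (hM2 : M ≤ K)
    (lam rho : Fin K → ℝ) (L Ahb Ahd Ahr : Fin K → ℕ)
    (hlam : ∀ k, 0 < lam k ∧ lam k ≤ 1) (hrho : ∀ k, 0 ≤ rho k ∧ rho k ≤ 1)
    (hL : ∀ k, 2 ≤ L k) (hAb : ∀ k, 1 ≤ Ahb k)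
    (hAd : ∀ k, 1 ≤ Ahd k) (hAr : ∀ k, 1 ≤ Ahr k)
    (Xdag : Fin K → S) (hdag : Xdag ∈ jointSpace L Ahb Ahd Ahr)
    (Vseq : ℕ → (Fin K → S) → ℝ)
    (hinit : ∀ x, Vseq 1 x = 0)
    (hrec : ∀ n, 1 ≤ n → ∀ x, Vseq (n + 1) x =
      (feasible K M).inf' (feasible_nonempty K M)
          (fun w => J lam rho L Ahb Ahd Ahr (Vseq n) x w) -
        (feasible K M).inf' (feasible_nonempty K M)
          (fun w => J lam rho L Ahb Ahd Ahr (Vseq n) Xdag w)) :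
    (∀ V : (Fin K → S) → ℝ,
      (∀ x1 ∈ jointSpace L Ahb Ahd Ahr, ∀ x2 ∈ jointSpace L Ahb Ahd Ahr,
        (∀ k, xleS (x1 k) (x2 k)) → V x1 ≤ V x2) →
      ∀ x1 ∈ jointSpace L Ahb Ahd Ahr, ∀ x2 ∈ jointSpace L Ahb Ahd Ahr,
        (∀ k, xleS (x1 k) (x2 k)) →
          (feasible K M).inf' (feasible_nonempty K M)
              (fun w => J lam rho L Ahb Ahd Ahr V x1 w) ≤
            (feasible K M).inf' (feasible_nonempty K M)
              (fun w => J lam rho L Ahb Ahd Ahr V x2 w)) ∧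
    (∀ n, 1 ≤ n → ∀ x1 ∈ jointSpace L Ahb Ahd Ahr,
      ∀ x2 ∈ jointSpace L Ahb Ahd Ahr,
        (∀ k, xleS (x1 k) (x2 k)) → Vseq n x1 ≤ Vseq n x2) ∧
    (∀ Vlim : (Fin K → S) → ℝ,
      (∀ x, Filter.Tendsto (fun n => Vseq n x) Filter.atTop (nhds (Vlim x))) →
      ∀ x1 ∈ jointSpace L Ahb Ahd Ahr, ∀ x2 ∈ jointSpace L Ahb Ahd Ahr,
        (∀ k, xleS (x1 k) (x2 k)) → Vlim x1 ≤ Vlim x2) :=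
  value_function_monotone_random_general K M lam rho L Ahb Ahd Ahr hlam hrho hL hAb hAd Xdag Vseq
    hinit hrec

end AoIRandom
end

section
/- Persistence of the optimal action in the random-arrival model (equation (27)). Let V : X → ℝ be monotone with respect to ⪯ and let w ∈ W. Let X, X' ∈ X satisfy: A'_{b,k} = A_{b,k}, A'_{r,k} = A_{r,k} and D'_k = D_k for all k; A'_{d,k} ≥ A_{d,k} for every k with w_k = (1,2); and A'_{d,k} = A_{d,k} for every other k. If J_V(X, w) ≤ J_V(X, w'') for all w'' ∈ W, then J_V(X', w) ≤ J_V(X', w'') for all w'' ∈ W; i.e., if w is an optimal action at X then w is an optimal action at X'. -/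
/-!
Under the action `(1,2)` a device's successor states do not involve its `A_d`, so raising
`A_d` only on such devices leaves `J_V(·, w)` unchanged: `J_V(X', w) = J_V(X, w)`. On the
other hand every successor map is monotone for `⪯`, and the joint kernel is the law of a
product of independent per-device outcomes, so `J_V(·, w'')` is monotone for monotone `V`:
`J_V(X, w'') ≤ J_V(X', w'')`. Chaining with the optimality of `w` at `X` gives the claim.
-/

namespace AoIRandom

open Finset

lemma sum_prod_mixture_mul {ι Ω α R : Type*} [Fintype ι] [DecidableEq ι] [Fintype Ω]
    [DecidableEq α] [CommSemiring R] (p : ι → Ω → R) (f : ι → Ω → α) (s : Finset (ι → α))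
    (hs : ∀ O : ι → Ω, (fun k => f k (O k)) ∈ s) (V : (ι → α) → R) :
    ∑ y ∈ s, (∏ k, ∑ o, p k o * if y k = f k o then 1 else 0) * V y =
      ∑ O : ι → Ω, (∏ k, p k (O k)) * V fun k => f k (O k) := by
  calc ∑ y ∈ s, (∏ k, ∑ o, p k o * if y k = f k o then 1 else 0) * V y
      = ∑ y ∈ s, ∑ O : ι → Ω,
          (∏ k, p k (O k)) * (if y = fun k => f k (O k) then 1 else 0) * V y := by
        refine sum_congr rfl fun y _ => ?_
        simp only [Fintype.prod_sum, prod_mul_distrib, Fintype.prod_boole, ← funext_iff,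
          sum_mul]
    _ = ∑ O : ι → Ω, ∑ y ∈ s,
          (∏ k, p k (O k)) * (if y = fun k => f k (O k) then 1 else 0) * V y := sum_comm
    _ = ∑ O : ι → Ω, (∏ k, p k (O k)) * V fun k => f k (O k) := by
        refine sum_congr rfl fun O _ => ?_
        simp [hs O]

-- `o.1`: an update arrives; `o.2`: the transmission succeeds (irrelevant when idle).
def next (Lk Ahb Ahd Ahr : ℕ) : Act → Bool × Bool → S → S
  | .idle, (true, _) => fCont1 Ahd Ahr
  | .idle, (false, _) => fCont2 Ahb Ahd Ahr
  | .cont, (true, true) => sCont1 Lk Ahd Ahr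
  | .cont, (true, false) => fCont1 Ahd Ahr
  | .cont, (false, true) => sCont2 Lk Ahb Ahd Ahr
  | .cont, (false, false) => fCont2 Ahb Ahd Ahr
  | .new, (true, true) => sNew1 Lk Ahr
  | .new, (true, false) => fNew1 Lk Ahr
  | .new, (false, true) => sNew2 Lk Ahb Ahd Ahr
  | .new, (false, false) => fNew2 Lk Ahb Ahd Ahr

def outcomeProb (lam rho : ℝ) (o : Bool × Bool) : ℝ :=
  (if o.1 then rho else 1 - rho) * (if o.2 then lam else 1 - lam)

lemma outcomeProb_nonneg {lam rho : ℝ} (hlam : 0 ≤ lam ∧ lam ≤ 1) (hrho : 0 ≤ rho ∧ rho ≤ 1)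
    (o : Bool × Bool) : 0 ≤ outcomeProb lam rho o := by
  unfold outcomeProb
  apply mul_nonneg <;> split_ifs <;> linarith

lemma Pk_eq_sum_outcomeProb (lam rho : ℝ) (Lk Ahb Ahd Ahr : ℕ) (x y : S) (a : Act) :
    Pk lam rho Lk Ahb Ahd Ahr x y a =
      ∑ o, outcomeProb lam rho o * if y = next Lk Ahb Ahd Ahr a o x then 1 else 0 := by
  cases a <;> simp only [Pk, Fintype.sum_prod_type, Fintype.sum_bool, outcomeProb, next,
    if_true, Bool.false_eq_true, if_false] <;> split_ifs <;> simp_all <;> ring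

lemma mem_spaceS {Lk Ahb Ahd Ahr : ℕ} {x : S} :
    x ∈ spaceS Lk Ahb Ahd Ahr ↔
      x.1 ≤ Ahb ∧ x.2.1 ≤ Ahd ∧ x.2.2.1 ≤ Ahr ∧ 1 ≤ x.2.2.2 ∧ x.2.2.2 ≤ Lk := by
  simp [spaceS]

lemma next_mem_spaceS {Lk Ahb Ahd Ahr : ℕ} (hL : 2 ≤ Lk) (hAb : 1 ≤ Ahb) (hAd : 1 ≤ Ahd)
    {x : S} (hx : x ∈ spaceS Lk Ahb Ahd Ahr) (a : Act) (o : Bool × Bool) :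
    next Lk Ahb Ahd Ahr a o x ∈ spaceS Lk Ahb Ahd Ahr := by
  rw [mem_spaceS] at hx ⊢
  rcases a with _ | _ | _ <;> rcases o with ⟨_ | _, _ | _⟩ <;>
    simp only [next, sCont1, sCont2, fCont1, fCont2, sNew1, sNew2, fNew1, fNew2] <;>
    (try split_ifs) <;> simp <;> omega

lemma next_mono {Lk Ahb Ahd Ahr : ℕ} {x y : S} (h : xleS x y) (a : Act) (o : Bool × Bool) :
    xleS (next Lk Ahb Ahd Ahr a o x) (next Lk Ahb Ahd Ahr a o y) := by
  obtain ⟨hb, hd, hr, hD⟩ := h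
  rcases a with _ | _ | _ <;> rcases o with ⟨_ | _, _ | _⟩ <;>
    simp only [next, sCont1, sCont2, fCont1, fCont2, sNew1, sNew2, fNew1, fNew2, xleS, hD] <;>
    (try split_ifs) <;> simp <;> omega

lemma next_new_congr {Lk Ahb Ahd Ahr : ℕ} {x y : S} (hb : x.1 = y.1) (hr : x.2.2.1 = y.2.2.1)
    (o : Bool × Bool) : next Lk Ahb Ahd Ahr .new o x = next Lk Ahb Ahd Ahr .new o y := by
  rcases o with ⟨_ | _, _ | _⟩ <;> simp [next, sNew1, sNew2, fNew1, fNew2, hb, hr]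

section Joint

variable {K : ℕ} {lam rho : Fin K → ℝ} {L Ahb Ahd Ahr : Fin K → ℕ}

def jointNext (L Ahb Ahd Ahr : Fin K → ℕ) (w : Fin K → Act) (O : Fin K → Bool × Bool)
    (x : Fin K → S) : Fin K → S :=
  fun k => next (L k) (Ahb k) (Ahd k) (Ahr k) (w k) (O k) (x k)

lemma jointNext_mem_jointSpace (hL : ∀ k, 2 ≤ L k) (hAb : ∀ k, 1 ≤ Ahb k)
    (hAd : ∀ k, 1 ≤ Ahd k)
    {x : Fin K → S} (hx : x ∈ jointSpace L Ahb Ahd Ahr) (w : Fin K → Act)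
    (O : Fin K → Bool × Bool) : jointNext L Ahb Ahd Ahr w O x ∈ jointSpace L Ahb Ahd Ahr :=
  Fintype.mem_piFinset.mpr fun k =>
    next_mem_spaceS (hL k) (hAb k) (hAd k) (Fintype.mem_piFinset.mp hx k) _ _

lemma J_eq_sum_outcomes (hL : ∀ k, 2 ≤ L k) (hAb : ∀ k, 1 ≤ Ahb k) (hAd : ∀ k, 1 ≤ Ahd k)
    (V : (Fin K → S) → ℝ) {x : Fin K → S} (hx : x ∈ jointSpace L Ahb Ahd Ahr)
    (w : Fin K → Act) :
    J lam rho L Ahb Ahd Ahr V x w = ∑ k, ((x k).2.2.1 : ℝ) +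
      ∑ O, (∏ k, outcomeProb (lam k) (rho k) (O k)) * V (jointNext L Ahb Ahd Ahr w O x) := by
  simp only [J, Pjoint, Pk_eq_sum_outcomeProb]
  rw [sum_prod_mixture_mul _ _ _ (jointNext_mem_jointSpace hL hAb hAd hx w)]
  rfl

lemma J_mono (hlam : ∀ k, 0 ≤ lam k ∧ lam k ≤ 1) (hrho : ∀ k, 0 ≤ rho k ∧ rho k ≤ 1)
    (hL : ∀ k, 2 ≤ L k) (hAb : ∀ k, 1 ≤ Ahb k) (hAd : ∀ k, 1 ≤ Ahd k)
    {V : (Fin K → S) → ℝ}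
    (hV : ∀ x1 ∈ jointSpace L Ahb Ahd Ahr, ∀ x2 ∈ jointSpace L Ahb Ahd Ahr,
      (∀ k, xleS (x1 k) (x2 k)) → V x1 ≤ V x2)
    {x y : Fin K → S} (hx : x ∈ jointSpace L Ahb Ahd Ahr) (hy : y ∈ jointSpace L Ahb Ahd Ahr)
    (hxy : ∀ k, xleS (x k) (y k)) (w : Fin K → Act) :
    J lam rho L Ahb Ahd Ahr V x w ≤ J lam rho L Ahb Ahd Ahr V y w := by
  rw [J_eq_sum_outcomes hL hAb hAd V hx, J_eq_sum_outcomes hL hAb hAd V hy]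
  gcongr with k _ O _
  · exact (hxy k).2.2.1
  · exact prod_nonneg fun k _ => outcomeProb_nonneg (hlam k) (hrho k) _
  · exact hV _ (jointNext_mem_jointSpace hL hAb hAd hx w O)
      _ (jointNext_mem_jointSpace hL hAb hAd hy w O)
      fun k => next_mono (hxy k) _ _

lemma J_eq_of_jointNext_eq (hL : ∀ k, 2 ≤ L k) (hAb : ∀ k, 1 ≤ Ahb k) (hAd : ∀ k, 1 ≤ Ahd k)
    (V : (Fin K → S) → ℝ) {x y : Fin K → S} (hx : x ∈ jointSpace L Ahb Ahd Ahr)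
    (hy : y ∈ jointSpace L Ahb Ahd Ahr) (w : Fin K → Act)
    (hr : ∀ k, (x k).2.2.1 = (y k).2.2.1)
    (hnext : ∀ O, jointNext L Ahb Ahd Ahr w O x = jointNext L Ahb Ahd Ahr w O y) :
    J lam rho L Ahb Ahd Ahr V x w = J lam rho L Ahb Ahd Ahr V y w := by
  simp only [J_eq_sum_outcomes hL hAb hAd V hx, J_eq_sum_outcomes hL hAb hAd V hy, hr, hnext]

end Joint

theorem persistence_of_optimal_action_random_general
    (K M : ℕ)
    (lam rho : Fin K → ℝ) (L Ahb Ahd Ahr : Fin K → ℕ)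
    (hlam : ∀ k, 0 < lam k ∧ lam k ≤ 1) (hrho : ∀ k, 0 ≤ rho k ∧ rho k ≤ 1)
    (hL : ∀ k, 2 ≤ L k) (hAb : ∀ k, 1 ≤ Ahb k)
    (hAd : ∀ k, 1 ≤ Ahd k)
    (V : (Fin K → S) → ℝ)
    (hV : ∀ x1 ∈ jointSpace L Ahb Ahd Ahr, ∀ x2 ∈ jointSpace L Ahb Ahd Ahr,
      (∀ k, xleS (x1 k) (x2 k)) → V x1 ≤ V x2)
    (w : Fin K → Act)
    (x x' : Fin K → S)
    (hx : x ∈ jointSpace L Ahb Ahd Ahr) (hx' : x' ∈ jointSpace L Ahb Ahd Ahr)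
    (hb : ∀ k, (x' k).1 = (x k).1)
    (hr : ∀ k, (x' k).2.2.1 = (x k).2.2.1)
    (hd : ∀ k, (x' k).2.2.2 = (x k).2.2.2)
    (hnew : ∀ k, w k = Act.new → (x k).2.1 ≤ (x' k).2.1)
    (hoth : ∀ k, w k ≠ Act.new → (x' k).2.1 = (x k).2.1)
    (hopt : ∀ w'' ∈ feasible K M,
      J lam rho L Ahb Ahd Ahr V x w ≤ J lam rho L Ahb Ahd Ahr V x w'') :
    ∀ w'' ∈ feasible K M,
      J lam rho L Ahb Ahd Ahr V x' w ≤ J lam rho L Ahb Ahd Ahr V x' w'' := by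
  intro w'' hw''
  have hle : ∀ k, xleS (x k) (x' k) := fun k => by
    refine ⟨(hb k).ge, ?_, (hr k).ge, (hd k).symm⟩
    by_cases hk : w k = .new
    · exact hnew k hk
    · exact (hoth k hk).ge
  have hnext : ∀ O, jointNext L Ahb Ahd Ahr w O x' = jointNext L Ahb Ahd Ahr w O x := by
    intro O; funext k
    by_cases hk : w k = .new
    · simp only [jointNext, hk]
      exact next_new_congr (hb k) (hr k) (O k)
    · have hxk : x' k = x k :=
        Prod.ext (hb k) <| Prod.ext (hoth k hk) <| Prod.ext (hr k) (hd k)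
      rw [jointNext, jointNext, hxk]
  calc J lam rho L Ahb Ahd Ahr V x' w
      = J lam rho L Ahb Ahd Ahr V x w := J_eq_of_jointNext_eq hL hAb hAd V hx' hx w hr hnext
    _ ≤ J lam rho L Ahb Ahd Ahr V x w'' := hopt w'' hw''
    _ ≤ J lam rho L Ahb Ahd Ahr V x' w'' :=
        J_mono (fun k => ⟨(hlam k).1.le, (hlam k).2⟩) hrho hL hAb hAd hV hx hx' hle w''

/-- equation (27): persistence of the optimal action in the
random-arrival model. -/
theorem persistence_of_optimal_action_random
    (K M : ℕ) (hK : 1 ≤ K) (hM1 : 1 ≤ M) (hM2 : M ≤ K)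
    (lam rho : Fin K → ℝ) (L Ahb Ahd Ahr : Fin K → ℕ)
    (hlam : ∀ k, 0 < lam k ∧ lam k ≤ 1) (hrho : ∀ k, 0 ≤ rho k ∧ rho k ≤ 1)
    (hL : ∀ k, 2 ≤ L k) (hAb : ∀ k, 1 ≤ Ahb k)
    (hAd : ∀ k, 1 ≤ Ahd k) (hAr : ∀ k, 1 ≤ Ahr k)
    (V : (Fin K → S) → ℝ)
    (hV : ∀ x1 ∈ jointSpace L Ahb Ahd Ahr, ∀ x2 ∈ jointSpace L Ahb Ahd Ahr,
      (∀ k, xleS (x1 k) (x2 k)) → V x1 ≤ V x2)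
    (w : Fin K → Act) (hw : w ∈ feasible K M)
    (x x' : Fin K → S)
    (hx : x ∈ jointSpace L Ahb Ahd Ahr) (hx' : x' ∈ jointSpace L Ahb Ahd Ahr)
    (hb : ∀ k, (x' k).1 = (x k).1)
    (hr : ∀ k, (x' k).2.2.1 = (x k).2.2.1)
    (hd : ∀ k, (x' k).2.2.2 = (x k).2.2.2)
    (hnew : ∀ k, w k = Act.new → (x k).2.1 ≤ (x' k).2.1)
    (hoth : ∀ k, w k ≠ Act.new → (x' k).2.1 = (x k).2.1)
    (hopt : ∀ w'' ∈ feasible K M,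
      J lam rho L Ahb Ahd Ahr V x w ≤ J lam rho L Ahb Ahd Ahr V x w'') :
    ∀ w'' ∈ feasible K M,
      J lam rho L Ahb Ahd Ahr V x' w ≤ J lam rho L Ahb Ahd Ahr V x' w'' :=
  persistence_of_optimal_action_random_general K M lam rho L Ahb Ahd Ahr hlam hrho hL hAb hAd V hV w
    x x' hx hx' hb hr hd hnew hoth hopt

end AoIRandom
end
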